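/- Suppose f(x) = (1/n) Σ_{i=1}^n f_i(x) is β-smooth and μ-PL with β ≥ μ > 0, each f_i is differentiable with ‖∇f_i(x)‖ ≤ σ for all i and x, and c ≥ n·ln(2)/r. Consider the iteration x_{t+1} = x_t - (1/β) ĝ(x_t), where ĝ(x) = g(x)/(1-p), g(x) = (1/n) Σ_{i=1}^{n/c} Y_i^{(t)} g[i](x), g[i](x) = Σ_{j=1}^c ∇f_{c(i-1)+j}(x), and at each iteration the block indicators Y^{(t)} are induced by an independent uniformly random r-subset of the k workers (partitioned into n/c blocks of size ℓ = kc/n, 2ℓ ≤ k). Then Δ_T := E[f(x_T) - f*] satisfies Δ_T ≤ (1 - μ/β)^T Δ_0 + e^{-cr/n}σ²/μ + 4c·e^{-cr/n}σ²/(μn). -/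

import Mathlib

/-!
Each iteration is a step of stochastic gradient descent whose randomness is the non-straggler
set `S`, uniform among the `r`-subsets of the `k` workers. Block `i` is lost exactly when `S`
misses its `ℓ` workers, which has probability `p`, so dividing by `1 - p` makes `ĝ` unbiased.
Missing two disjoint blocks are negatively correlated events
(`C(k-2ℓ, r) C(k, r) ≤ C(k-ℓ, r)²`), hence the variance of `ĝ` is at most
`p (1 - p)⁻² Σᵢ ‖g[i]‖² / n² ≤ 4 p c σ² / n` once `p ≤ 1/2`. The descent lemma for a
`β`-smooth function with step `1/β` and the PL inequality then give
`Δ_{t+1} ≤ (1 - μ/β) Δ_t + 2 p c σ² / (n β)`, and unrolling this recursion together with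
`p ≤ (1 - ℓ/k)^r ≤ e^{-cr/n} ≤ 1/2` gives the bound.
-/

open Finset

/-- The index `c*(i-1)+j` (0-indexed: `c*i + j`) of the `j`-th task in the `i`-th block. -/
def taskIdx (n c : ℕ) (hc : c ∣ n) (i : Fin (n / c)) (j : Fin c) : Fin n :=
  ⟨c * i.val + j.val, by
    calc c * i.val + j.val < c * i.val + c := Nat.add_lt_add_left j.isLt _
      _ = c * (i.val + 1) := (Nat.mul_succ c i.val).symm
      _ ≤ c * (n / c) := Nat.mul_le_mul (Nat.le_refl c) i.isLt
      _ = n := Nat.mul_div_cancel' hc⟩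

/-- The trajectory obtained by starting at `x0` and, at step `t`, applying the update
`upd (ω t)` determined by the non-straggler set `ω t` of that iteration. -/
def traj {k : ℕ} {E : Type*} (x0 : E) (upd : Finset (Fin k) → E → E)
    (ω : ℕ → Finset (Fin k)) : ℕ → E
  | 0 => x0
  | t + 1 => upd (ω t) (traj x0 upd ω t)

namespace Nat

theorem descFactorial_mul_pow_le_descFactorial_mul_pow {a k : ℕ} (h : a ≤ k) (r : ℕ) :
    a.descFactorial r * k ^ r ≤ k.descFactorial r * a ^ r := by
  have hk : k ^ r = ∏ _i ∈ range r, k := by rw [prod_const, card_range]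
  have ha : a ^ r = ∏ _i ∈ range r, a := by rw [prod_const, card_range]
  rw [hk, ha, descFactorial_eq_prod_range, descFactorial_eq_prod_range, ← prod_mul_distrib,
    ← prod_mul_distrib]
  refine prod_le_prod (fun _ _ => Nat.zero_le _) fun i _ => ?_
  rw [Nat.sub_mul, Nat.sub_mul, Nat.mul_comm a k]
  exact Nat.sub_le_sub_left (Nat.mul_le_mul_left i h) _

theorem choose_mul_pow_le_choose_mul_pow {a k : ℕ} (h : a ≤ k) (r : ℕ) :
    a.choose r * k ^ r ≤ k.choose r * a ^ r := by
  have := descFactorial_mul_pow_le_descFactorial_mul_pow h r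
  rw [descFactorial_eq_factorial_mul_choose, descFactorial_eq_factorial_mul_choose,
    Nat.mul_assoc, Nat.mul_assoc] at this
  exact Nat.le_of_mul_le_mul_left this r.factorial_pos

theorem descFactorial_mul_descFactorial_le_sq {a b m : ℕ} (h : a + b = 2 * m) (r : ℕ) :
    a.descFactorial r * b.descFactorial r ≤ m.descFactorial r ^ 2 := by
  simp only [descFactorial_eq_prod_range, ← prod_mul_distrib, ← prod_pow]
  refine prod_le_prod (fun _ _ => Nat.zero_le _) fun i _ => ?_
  rcases le_or_gt a i with ha | ha
  · simp [Nat.sub_eq_zero_of_le ha]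
  rcases le_or_gt b i with hb | hb
  · simp [Nat.sub_eq_zero_of_le hb]
  zify [ha.le, hb.le, (by omega : i ≤ m)]
  nlinarith [sq_nonneg ((a : ℤ) - b)]

theorem choose_mul_choose_le_sq {a b m : ℕ} (h : a + b = 2 * m) (r : ℕ) :
    a.choose r * b.choose r ≤ m.choose r ^ 2 := by
  have := descFactorial_mul_descFactorial_le_sq h r
  rw [descFactorial_eq_factorial_mul_choose, descFactorial_eq_factorial_mul_choose,
    descFactorial_eq_factorial_mul_choose, mul_pow, sq r.factorial,
    Nat.mul_mul_mul_comm] at this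
  exact Nat.le_of_mul_le_mul_left this (by positivity)

end Nat

theorem choose_sub_div_choose_le_exp {k a r : ℕ} (ha : a ≤ k) (hr : r ≤ k) :
    ((k - a).choose r : ℝ) / k.choose r ≤ Real.exp (-(a * r) / k) := by
  have hN : (0 : ℝ) < k.choose r := by exact_mod_cast Nat.choose_pos hr
  rcases Nat.eq_zero_or_pos k with rfl | hk
  · simp_all
  have hkR : (0 : ℝ) < k := by exact_mod_cast hk
  have key : ((k - a).choose r : ℝ) * k ^ r ≤ k.choose r * ((k - a : ℕ) : ℝ) ^ r := by
    exact_mod_cast Nat.choose_mul_pow_le_choose_mul_pow (Nat.sub_le k a) r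
  have hfrac : 0 ≤ 1 - (a : ℝ) / k := by
    rw [sub_nonneg, div_le_one hkR]; exact_mod_cast ha
  calc ((k - a).choose r : ℝ) / k.choose r ≤ (((k - a : ℕ) : ℝ) / k) ^ r := by
        rw [div_pow, div_le_div_iff₀ hN (by positivity)]; linarith
    _ = (1 - (a : ℝ) / k) ^ r := by rw [Nat.cast_sub ha]; field_simp
    _ ≤ Real.exp (-(a / k)) ^ r := pow_le_pow_left₀ hfrac (Real.one_sub_le_exp_neg _) r
    _ = Real.exp (-(a * r) / k) := by rw [← Real.exp_nat_mul]; ring_nf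

theorem choose_sub_div_choose_le_exp_of_mul_eq {n k c ℓ r : ℕ} (hn : 0 < n) (hk : 0 < k)
    (hℓk : ℓ ≤ k) (hr : r ≤ k) (hℓ : n * ℓ = k * c) :
    ((k - ℓ).choose r : ℝ) / k.choose r ≤ Real.exp (-(c * r) / n) := by
  have hrate : -(c * r : ℝ) / n = -(ℓ * r) / k := by
    have hℓR : (n : ℝ) * ℓ = k * c := by exact_mod_cast hℓ
    rw [div_eq_div_iff (by positivity) (by positivity)]
    linear_combination (r : ℝ) * hℓR
  rw [hrate]
  exact choose_sub_div_choose_le_exp hℓk hr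

theorem exp_neg_mul_div_le_half {c n r : ℝ} (hn : 0 < n) (hr : 0 < r)
    (hcr : c ≥ n * Real.log 2 / r) : Real.exp (-(c * r) / n) ≤ 1 / 2 := by
  have hlog : Real.log 2 ≤ c * r / n := by
    rw [ge_iff_le, div_le_iff₀ hr] at hcr
    rw [le_div_iff₀ hn]
    linarith
  calc Real.exp (-(c * r) / n) ≤ Real.exp (-Real.log 2) :=
        Real.exp_le_exp.2 (by rw [neg_div]; linarith)
    _ = 1 / 2 := by rw [Real.exp_neg, Real.exp_log two_pos, one_div]

section InnerProduct

variable {H : Type*} [NormedAddCommGroup H] [InnerProductSpace ℝ H]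

theorem sum_norm_sub_sq_eq_of_sum_eq {κ : Type*} {A : Finset κ} {g : κ → H} {m : H}
    (hmean : ∑ S ∈ A, g S = (#A : ℝ) • m) :
    ∑ S ∈ A, ‖g S - m‖ ^ 2 = ∑ S ∈ A, ‖g S‖ ^ 2 - #A * ‖m‖ ^ 2 := by
  simp only [norm_sub_sq_real, sum_add_distrib, sum_sub_distrib, ← mul_sum, ← sum_inner,
    hmean, sum_const, nsmul_eq_mul, real_inner_smul_left, real_inner_self_eq_norm_sq]
  ring

theorem sum_norm_sq_sum_smul {κ ι : Type*} [Fintype ι] (A : Finset κ) (a : κ → ι → ℝ)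
    (g : ι → H) :
    ∑ S ∈ A, ‖∑ i, a S i • g i‖ ^ 2
      = ∑ i, ∑ j, (∑ S ∈ A, a S i * a S j) * inner ℝ (g i) (g j) := by
  simp only [← real_inner_self_eq_norm_sq, sum_inner, inner_sum, real_inner_smul_left,
    real_inner_smul_right, sum_mul]
  rw [sum_comm]
  refine sum_congr rfl fun i _ => ?_
  rw [sum_comm]
  refine sum_congr rfl fun j _ => sum_congr rfl fun S _ => by rw [real_inner_comm (g i), mul_assoc]

theorem sum_sum_ite_mul_inner {ι : Type*} [Fintype ι] [DecidableEq ι] (a b : ℝ) (g : ι → H) :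
    ∑ i, ∑ j, (if i = j then a else b) * inner ℝ (g i) (g j)
      = b * ‖∑ i, g i‖ ^ 2 + (a - b) * ∑ i, ‖g i‖ ^ 2 := by
  have hsplit : ∀ i j : ι, (if i = j then a else b) = b + if i = j then a - b else 0 := by
    intro i j; split_ifs <;> ring
  simp only [hsplit, add_mul, sum_add_distrib, ite_mul, zero_mul, sum_ite_eq, mem_univ, if_true,
    ← mul_sum, ← real_inner_self_eq_norm_sq, sum_inner, inner_sum]
  rw [sum_comm]

end InnerProduct

section RandomSubset

variable {α : Type*} [Fintype α] [DecidableEq α]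

theorem sum_powersetCard_ite_disjoint (B : Finset α) (r : ℕ) :
    ∑ S ∈ powersetCard r (univ : Finset α), (if Disjoint S B then (1 : ℝ) else 0)
      = (Fintype.card α - #B).choose r := by
  have hfilter : {S ∈ powersetCard r (univ : Finset α) | Disjoint S B} = powersetCard r Bᶜ := by
    ext S
    simp [subset_compl_iff_disjoint_right, and_comm]
  rw [sum_boole, hfilter, card_powersetCard, card_compl]

variable {H : Type*} [NormedAddCommGroup H] [InnerProductSpace ℝ H]
variable {ι : Type*} [Fintype ι] {W : ι → Finset α} {ℓ r : ℕ}

theorem sum_powersetCard_sum_ite_disjoint_smul (hW : ∀ i, #(W i) = ℓ) (g : ι → H) :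
    ∑ S ∈ powersetCard r (univ : Finset α), ∑ i, (if Disjoint S (W i) then (1 : ℝ) else 0) • g i
      = ((Fintype.card α - ℓ).choose r : ℝ) • ∑ i, g i := by
  rw [sum_comm, smul_sum]
  refine sum_congr rfl fun i _ => ?_
  rw [← sum_smul, sum_powersetCard_ite_disjoint, hW]

theorem sum_powersetCard_norm_sq_sum_ite_disjoint_smul (hW : ∀ i, #(W i) = ℓ)
    (hdisj : Pairwise fun i j => Disjoint (W i) (W j)) (g : ι → H) :
    ∑ S ∈ powersetCard r (univ : Finset α),
        ‖∑ i, (if Disjoint S (W i) then (1 : ℝ) else 0) • g i‖ ^ 2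
      = ((Fintype.card α - 2 * ℓ).choose r : ℝ) * ‖∑ i, g i‖ ^ 2
        + (((Fintype.card α - ℓ).choose r : ℝ) - (Fintype.card α - 2 * ℓ).choose r)
          * ∑ i, ‖g i‖ ^ 2 := by
  classical
  have hpair : ∀ i j, ∑ S ∈ powersetCard r (univ : Finset α),
      (if Disjoint S (W i) then (1 : ℝ) else 0) * (if Disjoint S (W j) then (1 : ℝ) else 0)
        = if i = j then ((Fintype.card α - ℓ).choose r : ℝ)
          else (Fintype.card α - 2 * ℓ).choose r := by
    intro i j
    simp only [ite_zero_mul_ite_zero, mul_one, ← disjoint_union_right]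
    rw [sum_powersetCard_ite_disjoint]
    split_ifs with hij
    · rw [hij, union_self, hW]
    · rw [card_union_of_disjoint (hdisj hij), hW, hW, two_mul]
  rw [sum_norm_sq_sum_smul]
  simp only [hpair]
  exact sum_sum_ite_mul_inner _ _ g

end RandomSubset

section ErasureEstimate

variable {α : Type*} [DecidableEq α]
variable {H : Type*} [NormedAddCommGroup H] [InnerProductSpace ℝ H]
variable {ι : Type*} [Fintype ι]

/-- The paper's `ĝ`, with `g i` standing for `g[i] / n`. -/
noncomputable def erasureEstimate (W : ι → Finset α) (p : ℝ) (g : ι → H) (S : Finset α) : H :=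
  (1 - p)⁻¹ • ∑ i, (if (S ∩ W i).Nonempty then (1 : ℝ) else 0) • g i

theorem erasureEstimate_eq (W : ι → Finset α) (p : ℝ) (g : ι → H) (S : Finset α) :
    erasureEstimate W p g S
      = (1 - p)⁻¹ • (∑ i, g i - ∑ i, (if Disjoint S (W i) then (1 : ℝ) else 0) • g i) := by
  rw [erasureEstimate, ← sum_sub_distrib]
  congr 1
  refine sum_congr rfl fun i _ => ?_
  have hmiss := not_disjoint_iff_nonempty_inter (s := S) (t := W i)
  by_cases h : Disjoint S (W i) <;> simp [h, ← hmiss]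

variable [Fintype α] {W : ι → Finset α} {ℓ r : ℕ} {p : ℝ}

theorem sum_erasureEstimate (hr : r ≤ Fintype.card α) (hW : ∀ i, #(W i) = ℓ)
    (hp : p = ((Fintype.card α - ℓ).choose r : ℝ) / (Fintype.card α).choose r) (hp1 : p ≠ 1)
    (g : ι → H) :
    ∑ S ∈ powersetCard r (univ : Finset α), erasureEstimate W p g S
      = ((Fintype.card α).choose r : ℝ) • ∑ i, g i := by
  have hN : ((Fintype.card α).choose r : ℝ) ≠ 0 := by exact_mod_cast (Nat.choose_pos hr).ne'
  have hC₁ : ((Fintype.card α - ℓ).choose r : ℝ) = p * (Fintype.card α).choose r := by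
    rw [hp]; field_simp
  simp only [erasureEstimate_eq, ← smul_sum, sum_sub_distrib, sum_const, card_powersetCard,
    card_univ, sum_powersetCard_sum_ite_disjoint_smul hW, ← Nat.cast_smul_eq_nsmul ℝ, ← sub_smul,
    smul_smul]
  rw [hC₁, ← one_sub_mul, ← mul_assoc, inv_mul_cancel₀ (sub_ne_zero.mpr hp1.symm), one_mul]

theorem sum_norm_erasureEstimate_sub_sq_le (hr : r ≤ Fintype.card α)
    (h2ℓ : 2 * ℓ ≤ Fintype.card α) (hW : ∀ i, #(W i) = ℓ)
    (hdisj : Pairwise fun i j => Disjoint (W i) (W j))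
    (hp : p = ((Fintype.card α - ℓ).choose r : ℝ) / (Fintype.card α).choose r) (hp1 : p ≠ 1)
    (g : ι → H) :
    ∑ S ∈ powersetCard r (univ : Finset α), ‖erasureEstimate W p g S - ∑ i, g i‖ ^ 2
      ≤ p * (Fintype.card α).choose r * (∑ i, ‖g i‖ ^ 2) / (1 - p) ^ 2 := by
  set A := powersetCard r (univ : Finset α)
  set N : ℝ := ((Fintype.card α).choose r : ℝ)
  set C₁ : ℝ := ((Fintype.card α - ℓ).choose r : ℝ)
  set C₂ : ℝ := ((Fintype.card α - 2 * ℓ).choose r : ℝ)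
  set w : Finset α → H := fun S => ∑ i, (if Disjoint S (W i) then (1 : ℝ) else 0) • g i
  have hN : 0 < N := Nat.cast_pos.mpr (Nat.choose_pos hr)
  have hcardA : (#A : ℝ) = N := by simp [A, N, card_powersetCard]
  have hC₁ : C₁ = p * N := by rw [hp]; field_simp
  have h1p : 1 - p ≠ 0 := sub_ne_zero.mpr hp1.symm
  -- negative correlation of the two miss events: `C₂ / N ≤ (C₁ / N) ^ 2`
  have hC₂ : C₂ ≤ p * C₁ := by
    have h : C₂ * N ≤ C₁ ^ 2 := by
      have := Nat.choose_mul_choose_le_sq (a := Fintype.card α - 2 * ℓ) (b := Fintype.card α)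
        (m := Fintype.card α - ℓ) (by omega) r
      simp only [C₁, C₂, N]
      exact_mod_cast this
    rw [hC₁] at h ⊢
    nlinarith
  have hcentered : ∀ S, erasureEstimate W p g S - ∑ i, g i
      = (1 - p)⁻¹ • -(w S - p • ∑ i, g i) := by
    intro S
    rw [erasureEstimate_eq]
    conv_lhs => arg 2; rw [← inv_smul_smul₀ h1p (∑ i, g i)]
    rw [← smul_sub]
    congr 1
    module
  have hmean : ∑ S ∈ A, w S = (#A : ℝ) • (p • ∑ i, g i) := by
    rw [sum_powersetCard_sum_ite_disjoint_smul hW, hcardA, smul_smul, mul_comm, ← hC₁]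
  have hvar : ∑ S ∈ A, ‖w S - p • ∑ i, g i‖ ^ 2 ≤ C₁ * ∑ i, ‖g i‖ ^ 2 := by
    rw [sum_norm_sub_sq_eq_of_sum_eq hmean,
      sum_powersetCard_norm_sq_sum_ite_disjoint_smul hW hdisj, hcardA, norm_smul,
      Real.norm_eq_abs, mul_pow, sq_abs]
    have hpN : N * p ^ 2 = p * C₁ := by rw [hC₁]; ring
    nlinarith [mul_le_mul_of_nonneg_right hC₂ (sq_nonneg ‖∑ i, g i‖),
      mul_nonneg (Nat.cast_nonneg _ : (0 : ℝ) ≤ C₂)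
        (sum_nonneg fun i (_ : i ∈ univ) => sq_nonneg ‖g i‖)]
  simp only [hcentered, norm_smul, norm_neg, Real.norm_eq_abs, mul_pow, sq_abs, ← mul_sum,
    inv_pow]
  rw [← hC₁, inv_mul_eq_div]
  exact div_le_div_of_nonneg_right hvar (sq_nonneg _)

end ErasureEstimate

section Descent

variable {H : Type*} [NormedAddCommGroup H] [InnerProductSpace ℝ H]

theorem sum_sub_le_of_smooth_of_PL {κ : Type*} (A : Finset κ) {F : H → ℝ} {x G : H}
    {β μ fstar V : ℝ} (hβ : 0 < β)
    (hsmooth : ∀ y, F y ≤ F x + inner ℝ G (y - x) + (β / 2) * ‖y - x‖ ^ 2)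
    (hPL : μ * (F x - fstar) ≤ (1 / 2) * ‖G‖ ^ 2) (g : κ → H)
    (hmean : ∑ S ∈ A, g S = (#A : ℝ) • G) (hvar : ∑ S ∈ A, ‖g S - G‖ ^ 2 ≤ #A * V) :
    ∑ S ∈ A, (F (x - (1 / β) • g S) - fstar)
      ≤ #A * ((1 - μ / β) * (F x - fstar) + V / (2 * β)) := by
  have hstep : ∀ S ∈ A, F (x - (1 / β) • g S) - fstar
      ≤ F x - fstar - inner ℝ G (g S) / β + ‖g S‖ ^ 2 / (2 * β) := by
    intro S _
    have h := hsmooth (x - (1 / β) • g S)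
    rw [sub_sub_cancel_left, inner_neg_right, real_inner_smul_right, norm_neg, norm_smul,
      Real.norm_eq_abs, mul_pow, sq_abs] at h
    field_simp at h ⊢
    linarith
  have hsecond := sum_norm_sub_sq_eq_of_sum_eq hmean
  have hfirst : ∑ S ∈ A, inner ℝ G (g S) = #A * ‖G‖ ^ 2 := by
    rw [← inner_sum, hmean, real_inner_smul_right, real_inner_self_eq_norm_sq]
  refine (sum_le_sum hstep).trans ?_
  simp only [sum_add_distrib, sum_sub_distrib, sum_const, nsmul_eq_mul, ← sum_div, hfirst]
  have hsq : ∑ S ∈ A, ‖g S‖ ^ 2 ≤ #A * V + #A * ‖G‖ ^ 2 := by linarith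
  calc (#A : ℝ) * F x - #A * fstar - #A * ‖G‖ ^ 2 / β + (∑ S ∈ A, ‖g S‖ ^ 2) / (2 * β)
      ≤ #A * F x - #A * fstar - #A * ‖G‖ ^ 2 / β + (#A * V + #A * ‖G‖ ^ 2) / (2 * β) := by
        gcongr
    _ = #A * ((F x - fstar) + V / (2 * β)) - #A * (1 / 2 * ‖G‖ ^ 2) / β := by ring
    _ ≤ #A * ((F x - fstar) + V / (2 * β)) - #A * (μ * (F x - fstar)) / β := by gcongr
    _ = #A * ((1 - μ / β) * (F x - fstar) + V / (2 * β)) := by ring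

end Descent

section OneStep

variable {α : Type*} [Fintype α] [DecidableEq α]
variable {H : Type*} [NormedAddCommGroup H] [InnerProductSpace ℝ H]
variable {ι : Type*} [Fintype ι] {W : ι → Finset α} {ℓ r : ℕ} {p : ℝ}

theorem sum_sub_erasureEstimate_step_le (hr : r ≤ Fintype.card α)
    (h2ℓ : 2 * ℓ ≤ Fintype.card α) (hW : ∀ i, #(W i) = ℓ)
    (hdisj : Pairwise fun i j => Disjoint (W i) (W j))
    (hp : p = ((Fintype.card α - ℓ).choose r : ℝ) / (Fintype.card α).choose r) (hp2 : p ≤ 1 / 2)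
    {F : H → ℝ} {x : H} {g : ι → H} {b β μ fstar : ℝ} (hβ : 0 < β) (hg : ∀ i, ‖g i‖ ≤ b)
    (hsmooth : ∀ y, F y ≤ F x + inner ℝ (∑ i, g i) (y - x) + (β / 2) * ‖y - x‖ ^ 2)
    (hPL : μ * (F x - fstar) ≤ (1 / 2) * ‖∑ i, g i‖ ^ 2) :
    ∑ S ∈ powersetCard r (univ : Finset α), (F (x - (1 / β) • erasureEstimate W p g S) - fstar)
      ≤ (Fintype.card α).choose r
        * ((1 - μ / β) * (F x - fstar) + 2 * p * Fintype.card ι * b ^ 2 / β) := by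
  have hp1 : p ≠ 1 := by linarith
  have hcard : (#(powersetCard r (univ : Finset α)) : ℝ) = (Fintype.card α).choose r := by
    rw [card_powersetCard, card_univ]
  have hp0 : 0 ≤ p := by rw [hp]; positivity
  have hD : ∑ i, ‖g i‖ ^ 2 ≤ Fintype.card ι * b ^ 2 := by
    calc ∑ i, ‖g i‖ ^ 2 ≤ ∑ _i : ι, b ^ 2 :=
          sum_le_sum fun i _ => pow_le_pow_left₀ (norm_nonneg _) (hg i) 2
      _ = Fintype.card ι * b ^ 2 := by rw [sum_const, card_univ, nsmul_eq_mul]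
  have hvar : ∑ S ∈ powersetCard r (univ : Finset α), ‖erasureEstimate W p g S - ∑ i, g i‖ ^ 2
      ≤ #(powersetCard r (univ : Finset α)) * (4 * p * Fintype.card ι * b ^ 2) := by
    refine (sum_norm_erasureEstimate_sub_sq_le hr h2ℓ hW hdisj hp hp1 g).trans ?_
    rw [hcard, div_le_iff₀ (by nlinarith)]
    have hN : (0 : ℝ) ≤ (Fintype.card α).choose r := by positivity
    have h4 : 1 ≤ 4 * (1 - p) ^ 2 := by nlinarith
    calc p * (Fintype.card α).choose r * ∑ i, ‖g i‖ ^ 2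
        ≤ p * (Fintype.card α).choose r * (Fintype.card ι * b ^ 2) := by gcongr
      _ ≤ p * (Fintype.card α).choose r * (Fintype.card ι * b ^ 2) * (4 * (1 - p) ^ 2) :=
          le_mul_of_one_le_right (by positivity) h4
      _ = _ := by ring
  have := sum_sub_le_of_smooth_of_PL _ hβ hsmooth hPL _
    (by rw [hcard]; exact sum_erasureEstimate hr hW hp hp1 g) hvar
  rw [hcard] at this
  convert this using 3
  ring

end OneStep

theorem sum_range_one_sub_div_pow_le {μ β : ℝ} (hμ : 0 < μ) (hβμ : μ ≤ β) (T : ℕ) :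
    ∑ s ∈ range T, (1 - μ / β) ^ s ≤ β / μ := by
  have hβ : 0 < β := hμ.trans_le hβμ
  rw [range_eq_Ico]
  refine (geom_sum_Ico_le_of_lt_one (sub_nonneg.2 ((div_le_one hβ).2 hβμ))
    (sub_lt_self 1 (div_pos hμ hβ))).trans_eq ?_
  rw [pow_zero, sub_sub_cancel, one_div_div]

theorem sum_piFinset_const_succ {γ M : Type*} [DecidableEq γ] [AddCommMonoid M] (A : Finset γ)
    (t : ℕ) (g : (Fin (t + 1) → γ) → M) :
    ∑ ω ∈ Fintype.piFinset fun _ : Fin (t + 1) => A, g ω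
      = ∑ ω ∈ Fintype.piFinset fun _ : Fin t => A, ∑ S ∈ A, g (Fin.snoc ω S) := by
  have h := filter_piFinset_eq_map_snocEquiv (fun _ : Fin (t + 1) => A) (fun _ => True)
  simp only [filter_true] at h
  rw [h, sum_map, sum_product_right]
  rfl

section Trajectory

variable {k : ℕ} {E : Type*}

theorem traj_congr (x0 : E) (upd : Finset (Fin k) → E → E) {ω ω' : ℕ → Finset (Fin k)} {t : ℕ}
    (h : ∀ s < t, ω s = ω' s) : traj x0 upd ω t = traj x0 upd ω' t := by
  induction t with
  | zero => rfl
  | succ t ih =>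
    simp only [traj, h t t.lt_succ_self, ih fun s hs => h s (hs.trans t.lt_succ_self)]

theorem traj_snoc (x0 : E) (upd : Finset (Fin k) → E → E) (t : ℕ) (ω : Fin t → Finset (Fin k))
    (S : Finset (Fin k)) :
    traj x0 upd
        (fun s => if h : s < t + 1 then (Fin.snoc ω S : Fin (t + 1) → Finset (Fin k)) ⟨s, h⟩
          else ∅) (t + 1)
      = upd S (traj x0 upd (fun s => if h : s < t then ω ⟨s, h⟩ else ∅) t) := by
  rw [traj, dif_pos t.lt_succ_self]
  congr 1
  · exact Fin.snoc_last (α := fun _ => Finset (Fin k)) S ω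
  · refine traj_congr x0 upd fun s hs => ?_
    rw [dif_pos (hs.trans t.lt_succ_self), dif_pos hs]
    exact Fin.snoc_castSucc (α := fun _ => Finset (Fin k)) (i := ⟨s, hs⟩) S ω

theorem sum_piFinset_traj_le (A : Finset (Finset (Fin k))) (upd : Finset (Fin k) → E → E)
    (V : E → ℝ) {ρ ν : ℝ} (hρ : 0 ≤ ρ)
    (hstep : ∀ x, ∑ S ∈ A, V (upd S x) ≤ #A * (ρ * V x + ν)) (x0 : E) (T : ℕ) :
    ∑ ω ∈ Fintype.piFinset (fun _ : Fin T => A),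
        V (traj x0 upd (fun t => if h : t < T then ω ⟨t, h⟩ else ∅) T)
      ≤ (#A : ℝ) ^ T * (ρ ^ T * V x0 + ν * ∑ s ∈ range T, ρ ^ s) := by
  induction T with
  | zero => simp [traj]
  | succ t ih =>
    rw [sum_piFinset_const_succ]
    simp only [traj_snoc]
    calc _ ≤ ∑ ω ∈ Fintype.piFinset (fun _ : Fin t => A),
            (#A : ℝ) * (ρ * V (traj x0 upd (fun s => if h : s < t then ω ⟨s, h⟩ else ∅) t) + ν) :=
          sum_le_sum fun ω _ => hstep _
      _ = #A * ρ * ∑ ω ∈ Fintype.piFinset (fun _ : Fin t => A),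
            V (traj x0 upd (fun s => if h : s < t then ω ⟨s, h⟩ else ∅) t) + #A ^ (t + 1) * ν := by
          simp only [mul_add, sum_add_distrib, ← mul_sum, sum_const, Fintype.card_piFinset_const,
            nsmul_eq_mul, Nat.cast_pow]
          ring
      _ ≤ #A * ρ * ((#A : ℝ) ^ t * (ρ ^ t * V x0 + ν * ∑ s ∈ range t, ρ ^ s))
            + #A ^ (t + 1) * ν := by gcongr
      _ = _ := by simp only [sum_range_succ', pow_succ, ← sum_mul]; ring

end Trajectory

theorem gradient_const_mul_sum {H : Type*} [NormedAddCommGroup H] [InnerProductSpace ℝ H]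
    [CompleteSpace H] {ι : Type*} [Fintype ι] (a : ℝ) {f : ι → H → ℝ} {x : H}
    (hf : ∀ i, DifferentiableAt ℝ (f i) x) :
    gradient (fun y => a * ∑ i, f i y) x = a • ∑ i, gradient (f i) x := by
  rw [gradient, fderiv_const_mul (DifferentiableAt.fun_sum fun i _ => hf i),
    fderiv_fun_sum fun i _ => hf i, map_smul, map_sum]
  rfl

theorem sum_taskIdx {n c : ℕ} (hc : c ∣ n) {M : Type*} [AddCommMonoid M] (v : Fin n → M) :
    ∑ i, ∑ j, v (taskIdx n c hc i j) = ∑ i, v i := by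
  rw [← Fintype.sum_prod_type']
  refine Fintype.sum_equiv (finProdFinEquiv.trans (finCongr (Nat.div_mul_cancel hc))) _ _
    fun ij => congrArg v (Fin.ext ?_)
  simp [taskIdx, add_comm]

theorem erasureHead_sum_step_le {d n k c r ℓ : ℕ} (hn : 0 < n) (hc : c ∣ n) (hr : r ≤ k)
    (h2ℓ : 2 * ℓ ≤ k) {W : Fin (n / c) → Finset (Fin k)} (hWcard : ∀ i, #(W i) = ℓ)
    (hWdisj : Pairwise fun i j => Disjoint (W i) (W j))
    {f : Fin n → EuclideanSpace ℝ (Fin d) → ℝ} (hdiff : ∀ i, Differentiable ℝ (f i))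
    {σ β μ fstar p : ℝ} (hβ : 0 < β) (hσ : ∀ i x, ‖gradient (f i) x‖ ≤ σ)
    {F : EuclideanSpace ℝ (Fin d) → ℝ} (hF : F = fun y => (1 / (n : ℝ)) * ∑ i, f i y)
    {x : EuclideanSpace ℝ (Fin d)}
    (hsmooth : ∀ y, F y ≤ F x + inner ℝ (gradient F x) (y - x) + (β / 2) * ‖y - x‖ ^ 2)
    (hPL : μ * (F x - fstar) ≤ (1 / 2) * ‖gradient F x‖ ^ 2)
    (hp : p = ((k - ℓ).choose r : ℝ) / (k.choose r : ℝ)) (hp2 : p ≤ 1 / 2) :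
    ∑ S ∈ powersetCard r (univ : Finset (Fin k)),
        (F (x - (1 / β) • ((1 - p)⁻¹ • ((1 / (n : ℝ)) • ∑ i : Fin (n / c),
          (if (S ∩ W i).Nonempty then (1 : ℝ) else 0) •
            ∑ j : Fin c, gradient (f (taskIdx n c hc i j)) x))) - fstar)
      ≤ k.choose r * ((1 - μ / β) * (F x - fstar) + 2 * p * c * σ ^ 2 / (n * β)) := by
  set g : Fin (n / c) → EuclideanSpace ℝ (Fin d) :=
    fun i => (1 / (n : ℝ)) • ∑ j, gradient (f (taskIdx n c hc i j)) x
  have hgrad : gradient F x = ∑ i, g i := by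
    rw [hF, gradient_const_mul_sum _ fun i => (hdiff i).differentiableAt, ← smul_sum,
      sum_taskIdx hc fun i => gradient (f i) x]
  have hg : ∀ i, ‖g i‖ ≤ c * σ / n := fun i => by
    rw [norm_smul, Real.norm_of_nonneg (by positivity), one_div, inv_mul_eq_div]
    gcongr
    refine (norm_sum_le _ _).trans ?_
    simpa using sum_le_sum fun j (_ : j ∈ univ) => hσ (taskIdx n c hc i j) x
  have hest : ∀ S : Finset (Fin k), (1 - p)⁻¹ • ((1 / (n : ℝ)) • ∑ i,
      (if (S ∩ W i).Nonempty then (1 : ℝ) else 0) • ∑ j, gradient (f (taskIdx n c hc i j)) x)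
        = erasureEstimate W p g S := fun S => by
    simp only [erasureEstimate, g, smul_sum, smul_comm (1 / (n : ℝ))]
  have h := sum_sub_erasureEstimate_step_le (by simpa using hr) (by simpa using h2ℓ)
    hWcard hWdisj (by simpa using hp) hp2 hβ hg (hgrad ▸ hsmooth) (hgrad ▸ hPL)
  simp only [hest]
  refine h.trans_eq ?_
  have hc0 : (c : ℝ) ≠ 0 := by exact_mod_cast (Nat.pos_of_dvd_of_pos hc hn).ne'
  rw [Fintype.card_fin, Fintype.card_fin, Nat.cast_div hc hc0]
  field_simp

theorem erasurehead_convergence_exp_bound_step_one_over_beta_general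
    {d n k c r ℓ T : ℕ} (hn : 0 < n) (hc : c ∣ n) (hrpos : 0 < r)
    (hr : r ≤ k) (hℓ : n * ℓ = k * c) (h2ℓ : 2 * ℓ ≤ k)
    (hcr : (c : ℝ) ≥ (n : ℝ) * Real.log 2 / (r : ℝ))
    (W : Fin (n / c) → Finset (Fin k))
    (hWcard : ∀ i, (W i).card = ℓ)
    (hWdisj : ∀ i j, i ≠ j → Disjoint (W i) (W j))
    (f : Fin n → EuclideanSpace ℝ (Fin d) → ℝ)
    (hdiff : ∀ i, Differentiable ℝ (f i))
    (σ β μ fstar : ℝ) (hμ : 0 < μ) (hβμ : μ ≤ β)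
    (hσ : ∀ i x, ‖gradient (f i) x‖ ≤ σ)
    (F : EuclideanSpace ℝ (Fin d) → ℝ)
    (hF : F = fun y => (1 / (n : ℝ)) * ∑ i, f i y)
    (hsmooth : ∀ x y, F y ≤ F x + inner ℝ (gradient F x) (y - x) + (β / 2) * ‖y - x‖ ^ 2)
    (hPL : ∀ x, μ * (F x - fstar) ≤ (1 / 2) * ‖gradient F x‖ ^ 2)
    (p : ℝ)
    (hp : p = ((k - ℓ).choose r : ℝ) / (k.choose r : ℝ))
    (x0 : EuclideanSpace ℝ (Fin d))
    (X : (ℕ → Finset (Fin k)) → ℕ → EuclideanSpace ℝ (Fin d))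
    (hX : X = fun ω => traj x0 (fun S x => x - (1 / β) • ((1 - p)⁻¹ •
        ((1 / (n : ℝ)) • ∑ i : Fin (n / c),
          (if (S ∩ W i).Nonempty then (1 : ℝ) else 0) •
            ∑ j : Fin c, gradient (f (taskIdx n c hc i j)) x)) ) ω)
    (ΔT : ℝ)
    (hΔT : ΔT = (∑ ω ∈ Fintype.piFinset
          (fun _ : Fin T => Finset.powersetCard r (Finset.univ : Finset (Fin k))),
        (F (X (fun t => if h : t < T then ω ⟨t, h⟩ else ∅) T) - fstar))
      / ((k.choose r : ℝ)) ^ T) :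
    ΔT ≤ (1 - μ / β) ^ T * (F x0 - fstar)
      + Real.exp (-(c * r : ℝ) / (n : ℝ)) * σ ^ 2 / μ
      + 4 * c * Real.exp (-(c * r : ℝ) / (n : ℝ)) * σ ^ 2 / (μ * n) := by
  have hβ : 0 < β := hμ.trans_le hβμ
  have hpE : p ≤ Real.exp (-(c * r : ℝ) / n) :=
    hp ▸ choose_sub_div_choose_le_exp_of_mul_eq hn (hrpos.trans_le hr) (by omega) hr hℓ
  have hE : Real.exp (-(c * r : ℝ) / n) ≤ 1 / 2 :=
    exp_neg_mul_div_le_half (by positivity) (by positivity) hcr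
  have hstep := fun x => erasureHead_sum_step_le hn hc hr h2ℓ hWcard (fun i j => hWdisj i j)
    hdiff hβ hσ hF (hsmooth x) (hPL x) hp (hpE.trans hE)
  have hρ : 0 ≤ 1 - μ / β := sub_nonneg.2 ((div_le_one hβ).2 hβμ)
  have htraj := sum_piFinset_traj_le (powersetCard r univ) _ (fun x => F x - fstar) hρ
    (fun x => by rw [card_powersetCard, card_univ, Fintype.card_fin]; exact hstep x) x0 T
  have hnoise : 2 * p * c * σ ^ 2 / (n * β) * ∑ s ∈ range T, (1 - μ / β) ^ s
      ≤ 4 * c * Real.exp (-(c * r : ℝ) / n) * σ ^ 2 / (μ * n) := by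
    have hp0 : 0 ≤ p := by rw [hp]; positivity
    calc _ ≤ 2 * p * c * σ ^ 2 / (n * β) * (β / μ) :=
          mul_le_mul_of_nonneg_left (sum_range_one_sub_div_pow_le hμ hβμ T) (by positivity)
      _ = 2 * p * (c * σ ^ 2 / (μ * n)) := by field_simp
      _ ≤ 4 * Real.exp (-(c * r : ℝ) / n) * (c * σ ^ 2 / (μ * n)) := by gcongr; norm_num
      _ = _ := by ring
  subst hX hΔT
  rw [card_powersetCard, card_univ, Fintype.card_fin] at htraj
  rw [div_le_iff₀ (pow_pos (Nat.cast_pos.2 (Nat.choose_pos hr)) T), mul_comm]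
  refine htraj.trans ?_
  gcongr _ * ?_
  linarith [(by positivity : 0 ≤ Real.exp (-(c * r : ℝ) / n) * σ ^ 2 / μ)]

/-- Convergence of ErasureHead with step size `γ = 1/β` on a `β`-smooth, `μ`-PL function,
when `c ≥ n ln(2)/r`: `Δ_T ≤ (1-μ/β)^T Δ_0 + e^{-cr/n}σ²/μ + 4c e^{-cr/n}σ²/(μn)`. -/
theorem erasurehead_convergence_exp_bound_step_one_over_beta
    {d n k c r ℓ T : ℕ} (hn : 0 < n) (hc : c ∣ n) (hrpos : 0 < r)
    (hr : r ≤ k) (hℓ : n * ℓ = k * c) (h2ℓ : 2 * ℓ ≤ k)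
    (hcr : (c : ℝ) ≥ (n : ℝ) * Real.log 2 / (r : ℝ))
    (W : Fin (n / c) → Finset (Fin k))
    (hWcard : ∀ i, (W i).card = ℓ)
    (hWdisj : ∀ i j, i ≠ j → Disjoint (W i) (W j))
    (f : Fin n → EuclideanSpace ℝ (Fin d) → ℝ)
    (hdiff : ∀ i, Differentiable ℝ (f i))
    (σ β μ fstar : ℝ) (hμ : 0 < μ) (hβμ : μ ≤ β)
    (hσ : ∀ i x, ‖gradient (f i) x‖ ≤ σ)
    (F : EuclideanSpace ℝ (Fin d) → ℝ)
    (hF : F = fun y => (1 / (n : ℝ)) * ∑ i, f i y)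
    (hsmooth : ∀ x y, F y ≤ F x + inner ℝ (gradient F x) (y - x) + (β / 2) * ‖y - x‖ ^ 2)
    (hmin : ∀ x, fstar ≤ F x) (hattain : ∃ x, F x = fstar)
    (hPL : ∀ x, μ * (F x - fstar) ≤ (1 / 2) * ‖gradient F x‖ ^ 2)
    (p : ℝ)
    (hp : p = ((k - ℓ).choose r : ℝ) / (k.choose r : ℝ))
    (x0 : EuclideanSpace ℝ (Fin d))
    (X : (ℕ → Finset (Fin k)) → ℕ → EuclideanSpace ℝ (Fin d))
    (hX : X = fun ω => traj x0 (fun S x => x - (1 / β) • ((1 - p)⁻¹ •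
        ((1 / (n : ℝ)) • ∑ i : Fin (n / c),
          (if (S ∩ W i).Nonempty then (1 : ℝ) else 0) •
            ∑ j : Fin c, gradient (f (taskIdx n c hc i j)) x)) ) ω)
    (ΔT : ℝ)
    (hΔT : ΔT = (∑ ω ∈ Fintype.piFinset
          (fun _ : Fin T => Finset.powersetCard r (Finset.univ : Finset (Fin k))),
        (F (X (fun t => if h : t < T then ω ⟨t, h⟩ else ∅) T) - fstar))
      / ((k.choose r : ℝ)) ^ T) :
    ΔT ≤ (1 - μ / β) ^ T * (F x0 - fstar)
      + Real.exp (-(c * r : ℝ) / (n : ℝ)) * σ ^ 2 / μ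
      + 4 * c * Real.exp (-(c * r : ℝ) / (n : ℝ)) * σ ^ 2 / (μ * n) :=
  erasurehead_convergence_exp_bound_step_one_over_beta_general hn hc hrpos hr hℓ h2ℓ hcr W hWcard
    hWdisj f hdiff σ β μ fstar hμ hβμ hσ F hF hsmooth hPL p hp x0 X hX ΔT hΔT
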